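/- Let A be a real symmetric matrix in S(P_4) for the path P_4 on vertices 1-2-3-4 (so a_{12}, a_{23}, a_{34} ≠ 0, and a_{13} = a_{14} = a_{24} = 0). Then A has the Strong Arnold Property. -/

import Mathlib

/-
Write the three off-path entries of X as x = X₁₃, y = X₂₄, z = X₁₄. Because X vanishes on the
diagonal and on the path edges, and A vanishes off the path, three entries of AX each reduce to a
single product: (AX)₂₃ = a₂₁ x, (AX)₃₄ = a₃₂ y and, once y = 0, (AX)₂₄ = a₂₁ z. Since the path
entries of A are nonzero, x = y = z = 0.
-/

def HasSAP {n : ℕ} (A : Matrix (Fin n) (Fin n) ℝ) : Prop :=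
  ∀ X : Matrix (Fin n) (Fin n) ℝ, X.IsSymm → (∀ i, X i i = 0) →
    (∀ i j, i ≠ j → A i j ≠ 0 → X i j = 0) → A * X = 0 → X = 0

namespace Matrix

variable {n R : Type*}

theorem eq_zero_of_mul_eq_zero_of_single_term [Fintype n] [Semiring R] [NoZeroDivisors R]
    {A X : Matrix n n R} (hAX : A * X = 0) {i j k : n} (hk : A i k ≠ 0)
    (hother : ∀ l, l ≠ k → A i l * X l j = 0) : X k j = 0 := by
  have hij : (A * X) i j = A i k * X k j := by
    rw [mul_apply]
    exact Finset.sum_eq_single k (fun l _ hl => hother l hl) (by simp)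
  rw [hAX, zero_apply] at hij
  exact (mul_eq_zero.mp hij.symm).resolve_left hk

theorem IsSymm.eq_zero_of_upper [LinearOrder n] [Zero R] {X : Matrix n n R} (hX : X.IsSymm)
    (hupper : ∀ i j, i ≤ j → X i j = 0) : X = 0 := by
  ext i j
  rcases le_total i j with hij | hji
  · exact hupper i j hij
  · rw [← hX.apply, hupper j i hji, zero_apply]

end Matrix

theorem stmt_5_general (A : Matrix (Fin 4) (Fin 4) ℝ) (hsymm : A.IsSymm)
    (h12 : A 0 1 ≠ 0) (h23 : A 1 2 ≠ 0) (h34 : A 2 3 ≠ 0)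
    (h13 : A 0 2 = 0) (h24 : A 1 3 = 0) : HasSAP A := by
  intro X hX hdiag hedge hAX
  have x12 : X 0 1 = 0 := hedge 0 1 (by decide) h12
  have x23 : X 1 2 = 0 := hedge 1 2 (by decide) h23
  have x34 : X 2 3 = 0 := hedge 2 3 (by decide) h34
  have a21 : A 1 0 ≠ 0 := hsymm.apply 0 1 ▸ h12
  have a32 : A 2 1 ≠ 0 := hsymm.apply 1 2 ▸ h23
  have a31 : A 2 0 = 0 := hsymm.apply 0 2 ▸ h13
  have x13 : X 0 2 = 0 := Matrix.eq_zero_of_mul_eq_zero_of_single_term hAX a21 fun l hl => by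
    fin_cases l <;> simp_all
  have x24 : X 1 3 = 0 := Matrix.eq_zero_of_mul_eq_zero_of_single_term hAX a32 fun l hl => by
    fin_cases l <;> simp_all
  have x14 : X 0 3 = 0 := Matrix.eq_zero_of_mul_eq_zero_of_single_term hAX a21 fun l hl => by
    fin_cases l <;> simp_all
  refine hX.eq_zero_of_upper fun i j hij => ?_
  fin_cases i <;> fin_cases j <;> first | exact hdiag _ | assumption | exact absurd hij (by decide)

theorem stmt_5 (A : Matrix (Fin 4) (Fin 4) ℝ) (hsymm : A.IsSymm)
    (h12 : A 0 1 ≠ 0) (h23 : A 1 2 ≠ 0) (h34 : A 2 3 ≠ 0)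
    (h13 : A 0 2 = 0) (h14 : A 0 3 = 0) (h24 : A 1 3 = 0) : HasSAP A :=
  stmt_5_general A hsymm h12 h23 h34 h13 h24
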